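/- arXiv:1608.02240 — 7 statements merged into one kernel-verified Lean document; each statement's English description precedes it below -/
import Mathlib

section
/- If T : X → X is nonexpansive, then the closure of the range of Id − T is a convex set. -/
/-!
`A := id - T` is monotone. For `w = a • A x + b • A y` and `c = a • x + b • y` (with `a + b = 1`),
averaging the monotonicity inequalities at `x` and `y` bounds `⟪A z - w, z - c⟫` below by a
constant `K`, uniformly in `z`. Solving the resolvent equation `A z + μ • (z - c) = w` up to an
error `δ` (an approximate fixed point of a strict contraction, which needs no completeness) and
setting `d = A z - w`, this bound becomes `‖d‖² ≤ ‖d‖ δ - μ K`, so `A z → w` as `μ, δ → 0`.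
Hence every segment between points of the range of `A` lies in its closure, which is therefore
convex.
-/

open Set Filter Topology
open scoped InnerProductSpace NNReal

theorem ContractingWith.exists_dist_apply_lt {α : Type*} [MetricSpace α] {K : ℝ≥0}
    {f : α → α} (hf : ContractingWith K f) (x : α) {δ : ℝ} (hδ : 0 < δ) :
    ∃ z, dist z (f z) < δ := by
  have hgeom : Tendsto (fun n : ℕ => dist x (f x) * (K : ℝ) ^ n) atTop (𝓝 0) := by
    simpa using (tendsto_pow_atTop_nhds_zero_of_lt_one K.2 hf.1).const_mul (dist x (f x))
  obtain ⟨n, hn⟩ := (hgeom.eventually_lt_const hδ).exists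
  exact ⟨f^[n] x, by
    simpa only [Function.iterate_succ_apply'] using
      (hf.toLipschitzWith.dist_iterate_succ_le_geometric x n).trans_lt hn⟩

theorem convex_closure_of_segment_subset_closure {𝕜 E : Type*} [Semiring 𝕜] [PartialOrder 𝕜]
    [AddCommMonoid E] [TopologicalSpace E] [ContinuousAdd E] [Module 𝕜 E]
    [ContinuousConstSMul 𝕜 E] {s : Set E} (h : ∀ u ∈ s, ∀ v ∈ s, segment 𝕜 u v ⊆ closure s) :
    Convex 𝕜 (closure s) := by
  intro u hu v hv a b ha hb hab
  rw [← closure_closure (s := s)]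
  exact map_mem_closure₂' (f := fun u v => a • u + b • v) (by fun_prop) (by fun_prop) hu hv
    fun u hu v hv => h u hu v hv ⟨a, b, ha, hb, hab, rfl⟩

section InnerProductSpace

variable {X : Type*} [NormedAddCommGroup X] [InnerProductSpace ℝ X]

def IsMonotoneOperator (A : X → X) : Prop :=
  ∀ x y, 0 ≤ ⟪A x - A y, x - y⟫_ℝ

theorem LipschitzWith.isMonotoneOperator_id_sub {T : X → X} (hT : LipschitzWith 1 T) :
    IsMonotoneOperator fun x => x - T x := by
  intro x y
  have hTxy : ⟪T x - T y, x - y⟫_ℝ ≤ ‖x - y‖ * ‖x - y‖ :=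
    (real_inner_le_norm _ _).trans <| mul_le_mul_of_nonneg_right
      (by simpa [dist_eq_norm] using hT.dist_le_mul x y) (norm_nonneg _)
  dsimp only
  rw [show x - T x - (y - T y) = (x - y) - (T x - T y) by abel, inner_sub_left,
    real_inner_self_eq_norm_mul_norm]
  linarith

theorem IsMonotoneOperator.le_inner_sub_convexCombination {A : X → X}
    (hA : IsMonotoneOperator A) {a b : ℝ} (ha : 0 ≤ a) (hb : 0 ≤ b) (hab : a + b = 1)
    (x y z : X) :
    ⟪a • A x + b • A y, a • x + b • y⟫_ℝ - a * ⟪A x, x⟫_ℝ - b * ⟪A y, y⟫_ℝ ≤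
      ⟪A z - (a • A x + b • A y), z - (a • x + b • y)⟫_ℝ := by
  have hcomb := add_nonneg (mul_nonneg ha (hA z x)) (mul_nonneg hb (hA z y))
  obtain rfl : b = 1 - a := by linarith
  simp only [inner_sub_left, inner_sub_right, inner_add_left, inner_add_right,
    real_inner_smul_left, real_inner_smul_right] at hcomb ⊢
  linarith

theorem LipschitzWith.exists_norm_resolvent_sub_lt {T : X → X} (hT : LipschitzWith 1 T)
    {μ : ℝ} (hμ : 0 < μ) (c w : X) {δ : ℝ} (hδ : 0 < δ) :
    ∃ z, ‖(z - T z) + μ • (z - c) - w‖ < δ := by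
  have hμ' : 0 < 1 + μ := by linarith
  have hf : ContractingWith ‖(1 + μ)⁻¹‖₊ fun z => (1 + μ)⁻¹ • (T z + (w + μ • c)) := by
    refine ⟨?_, ?_⟩
    · rw [← NNReal.coe_lt_coe, coe_nnnorm, NNReal.coe_one, Real.norm_of_nonneg (by positivity)]
      exact inv_lt_one_of_one_lt₀ (by linarith)
    · simpa only [add_zero, mul_one, Function.comp_def] using
        (lipschitzWith_smul (1 + μ)⁻¹).comp (hT.add (LipschitzWith.const (w + μ • c)))
  obtain ⟨z, hz⟩ := hf.exists_dist_apply_lt 0 (div_pos hδ hμ')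
  refine ⟨z, ?_⟩
  have hres : (z - T z) + μ • (z - c) - w =
      (1 + μ) • (z - (1 + μ)⁻¹ • (T z + (w + μ • c))) := by
    rw [smul_sub (1 + μ) z, smul_inv_smul₀ hμ'.ne']
    module
  rwa [hres, norm_smul, ← dist_eq_norm, Real.norm_of_nonneg hμ'.le, ← lt_div_iff₀' hμ']

theorem mem_closure_range_of_le_inner {A : X → X} {w c : X} {K : ℝ}
    (hK : ∀ z, K ≤ ⟪A z - w, z - c⟫_ℝ)
    (hres : ∀ μ : ℝ, 0 < μ → ∀ δ : ℝ, 0 < δ → ∃ z, ‖A z + μ • (z - c) - w‖ < δ) :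
    w ∈ closure (range A) := by
  rw [Metric.mem_closure_iff]
  intro ε hε
  set μ := ε ^ 2 / (4 * (|K| + 1))
  have hμ : 0 < μ := by positivity
  have hμK : μ * |K| < ε ^ 2 / 4 :=
    calc μ * |K| < μ * (|K| + 1) := by gcongr; linarith
      _ = ε ^ 2 / 4 := by simp only [μ]; field_simp
  obtain ⟨z, hz⟩ := hres μ hμ (ε / 2) (by positivity)
  set d := A z - w
  set e := A z + μ • (z - c) - w
  -- Since `μ • (z - c) = e - d`, the lower bound reads `‖d‖² ≤ ⟪d, e⟫ - μ K`.
  have hde : μ • (z - c) = e - d := by simp only [d, e]; abel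
  have hlow : μ * K ≤ ⟪d, e - d⟫_ℝ := by
    rw [← hde, real_inner_smul_right]
    exact mul_le_mul_of_nonneg_left (hK z) hμ.le
  rw [inner_sub_right, real_inner_self_eq_norm_mul_norm] at hlow
  refine ⟨A z, mem_range_self z, ?_⟩
  rw [dist_comm, dist_eq_norm]
  by_contra! hd
  nlinarith [neg_abs_le K, real_inner_le_norm d e, norm_nonneg e, norm_nonneg d,
    mul_le_mul_of_nonneg_left hz.le (norm_nonneg d)]

end InnerProductSpace

theorem closure_range_displacement_convex
    {X : Type*} [NormedAddCommGroup X] [InnerProductSpace ℝ X]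
    (T : X → X) (hT : ∀ x y : X, ‖T x - T y‖ ≤ ‖x - y‖) :
    Convex ℝ (closure (Set.range fun x : X => x - T x)) := by
  have hT' : LipschitzWith 1 T :=
    LipschitzWith.mk_one fun x y => by simpa only [dist_eq_norm] using hT x y
  refine convex_closure_of_segment_subset_closure ?_
  rintro _ ⟨x, rfl⟩ _ ⟨y, rfl⟩ _ ⟨a, b, ha, hb, hab, rfl⟩
  exact mem_closure_range_of_le_inner
    (hT'.isMonotoneOperator_id_sub.le_inner_sub_convexCombination ha hb hab x y)
    fun μ hμ δ hδ => hT'.exists_norm_resolvent_sub_lt hμ _ _ hδ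
end

section
/- Let T be an averaged operator (T = (1−α)Id + αN, α ∈ (0,1), N nonexpansive) and suppose v ∈ X satisfies v + T has a fixed point and v is the projection of 0 onto the closure of ran(Id − T). Then for every x ∈ X, the series ∑ₙ ‖Tⁿx − Tⁿ⁺¹x − v‖² converges (is finite), and consequently Tⁿx − Tⁿ⁺¹x → v. -/
/-!
Write `A = Id - T`. An `α`-averaged map satisfies
`‖T a - T b‖² + κ ‖A a - A b‖² ≤ ‖a - b‖²` with `κ = (1 - α) / α > 0`. Applied to `T z` and `z`,
where `A z = v` has minimal norm, this forces `A (T z) = v`, so `A = v` along the whole orbit of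
`z`. Applied to `Tⁿ x` and `Tⁿ z`, it then shows that `‖Tⁿ x - Tⁿ z‖²` decreases by at least
`κ ‖A (Tⁿ x) - v‖²` at each step, so these terms are summable.
-/

open scoped RealInnerProductSpace

/-- For `κ = (1 - α) / α` this characterizes `α`-averaged maps
(Bauschke–Combettes). -/
def IsStronglyNonexpansive {X : Type*} [Norm X] [Sub X] (κ : ℝ) (T : X → X) : Prop :=
  ∀ a b, ‖T a - T b‖ ^ 2 + κ * ‖(a - T a) - (b - T b)‖ ^ 2 ≤ ‖a - b‖ ^ 2

theorem norm_one_sub_smul_add_smul_sq {X : Type*} [NormedAddCommGroup X] [InnerProductSpace ℝ X]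
    (α : ℝ) (x y : X) :
    ‖(1 - α) • x + α • y‖ ^ 2 =
      (1 - α) * ‖x‖ ^ 2 + α * ‖y‖ ^ 2 - α * (1 - α) * ‖x - y‖ ^ 2 := by
  simp only [← real_inner_self_eq_norm_sq, inner_add_left, inner_add_right, inner_sub_left,
    inner_sub_right, real_inner_smul_left, real_inner_smul_right, real_inner_comm x y]
  ring

theorem isStronglyNonexpansive_averaged {X : Type*} [NormedAddCommGroup X]
    [InnerProductSpace ℝ X] {N : X → X} (hN : ∀ x y, ‖N x - N y‖ ≤ ‖x - y‖)
    {α : ℝ} (hα : α ∈ Set.Ioo (0 : ℝ) 1) :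
    IsStronglyNonexpansive ((1 - α) / α) fun x => (1 - α) • x + α • N x := by
  intro a b
  have hT : ((1 - α) • a + α • N a) - ((1 - α) • b + α • N b) =
      (1 - α) • (a - b) + α • (N a - N b) := by module
  have hA : (a - ((1 - α) • a + α • N a)) - (b - ((1 - α) • b + α • N b)) =
      α • ((a - b) - (N a - N b)) := by module
  have hNsq : ‖N a - N b‖ ^ 2 ≤ ‖a - b‖ ^ 2 := by gcongr; exact hN a b
  rw [hT, hA, norm_one_sub_smul_add_smul_sq, norm_smul, Real.norm_of_nonneg hα.1.le, mul_pow]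
  field_simp
  nlinarith [mul_le_mul_of_nonneg_left hNsq hα.1.le]

theorem summable_of_le_sub_succ {f Φ : ℕ → ℝ} (hf : ∀ n, 0 ≤ f n) (hΦ : ∀ n, 0 ≤ Φ n)
    (h : ∀ n, f n ≤ Φ n - Φ (n + 1)) : Summable f :=
  summable_of_sum_range_le hf fun n => calc
    ∑ i ∈ Finset.range n, f i ≤ ∑ i ∈ Finset.range n, (Φ i - Φ (i + 1)) :=
      Finset.sum_le_sum fun i _ => h i
    _ = Φ 0 - Φ n := Finset.sum_range_sub' Φ n
    _ ≤ Φ 0 := sub_le_self _ (hΦ n)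

theorem tendsto_of_summable_norm_sub_sq {X : Type*} [SeminormedAddCommGroup X]
    {u : ℕ → X} {v : X} (hu : Summable fun n => ‖u n - v‖ ^ 2) :
    Filter.Tendsto u Filter.atTop (nhds v) := by
  rw [tendsto_iff_norm_sub_tendsto_zero]
  simpa using hu.tendsto_atTop_zero.sqrt

namespace IsStronglyNonexpansive

variable {X : Type*} [NormedAddCommGroup X] {T : X → X} {κ : ℝ} {v z : X}

theorem sub_apply_apply_eq (hT : IsStronglyNonexpansive κ T) (hκ : 0 < κ)
    (hv : ∀ y, ‖v‖ ≤ ‖y - T y‖) (hz : z - T z = v) : T z - T (T z) = v := by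
  have h := hT (T z) z
  rw [hz, norm_sub_rev (T (T z)), norm_sub_rev (T z) z, hz] at h
  have hsq : ‖v‖ ^ 2 ≤ ‖T z - T (T z)‖ ^ 2 := by gcongr; exact hv (T z)
  have hw : ‖T z - T (T z) - v‖ ^ 2 ≤ 0 := nonpos_of_mul_nonpos_right (by linarith) hκ
  simpa [sub_eq_zero] using hw

theorem iterate_sub_iterate_succ_eq (hT : IsStronglyNonexpansive κ T) (hκ : 0 < κ)
    (hv : ∀ y, ‖v‖ ≤ ‖y - T y‖) (hz : z - T z = v) (n : ℕ) :
    T^[n] z - T^[n + 1] z = v := by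
  induction n with
  | zero => exact hz
  | succ n ih =>
    rw [Function.iterate_succ_apply' T (n + 1), Function.iterate_succ_apply']
    rw [Function.iterate_succ_apply'] at ih
    exact hT.sub_apply_apply_eq hκ hv ih

theorem summable_norm_iterate_sub_iterate_succ_sub_sq (hT : IsStronglyNonexpansive κ T)
    (hκ : 0 < κ) (hz : ∀ n, T^[n] z - T^[n + 1] z = v) (x : X) :
    Summable fun n => ‖T^[n] x - T^[n + 1] x - v‖ ^ 2 := by
  refine (summable_mul_left_iff hκ.ne').1 <|
    summable_of_le_sub_succ (Φ := fun n => ‖T^[n] x - T^[n] z‖ ^ 2) (fun n => by positivity)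
      (fun n => by positivity) fun n => ?_
  have h := hT (T^[n] x) (T^[n] z)
  rw [← Function.iterate_succ_apply' T n x, ← Function.iterate_succ_apply' T n z,
    hz n] at h
  linarith

end IsStronglyNonexpansive

theorem averaged_displacement_tendsto_min_vector_general
    {X : Type*} [NormedAddCommGroup X] [InnerProductSpace ℝ X]
    (N : X → X) (hN : ∀ x y : X, ‖N x - N y‖ ≤ ‖x - y‖)
    (α : ℝ) (hα : α ∈ Set.Ioo (0 : ℝ) 1)
    (T : X → X) (hT : ∀ x : X, T x = (1 - α) • x + α • N x)
    (v : X)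
    (hv_min : ∀ w ∈ closure (Set.range fun y : X => y - T y), ‖v‖ ≤ ‖w‖)
    (hv_ran : v ∈ Set.range fun y : X => y - T y) :
    ∀ x : X,
      (Summable fun n : ℕ => ‖T^[n] x - T^[n + 1] x - v‖ ^ 2) ∧
      Filter.Tendsto (fun n : ℕ => T^[n] x - T^[n + 1] x) Filter.atTop (nhds v) := by
  have hT' : IsStronglyNonexpansive ((1 - α) / α) T := by
    rw [show T = _ from funext hT]
    exact isStronglyNonexpansive_averaged hN hα
  have hκ : 0 < (1 - α) / α := div_pos (sub_pos.2 hα.2) hα.1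
  have hv : ∀ y, ‖v‖ ≤ ‖y - T y‖ := fun y => hv_min _ (subset_closure ⟨y, rfl⟩)
  obtain ⟨z, hz⟩ := hv_ran
  intro x
  have hsum := hT'.summable_norm_iterate_sub_iterate_succ_sub_sq hκ
    (hT'.iterate_sub_iterate_succ_eq hκ hv hz) x
  exact ⟨hsum, tendsto_of_summable_norm_sub_sq hsum⟩

theorem averaged_displacement_tendsto_min_vector
    {X : Type*} [NormedAddCommGroup X] [InnerProductSpace ℝ X] [CompleteSpace X]
    (N : X → X) (hN : ∀ x y : X, ‖N x - N y‖ ≤ ‖x - y‖)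
    (α : ℝ) (hα : α ∈ Set.Ioo (0 : ℝ) 1)
    (T : X → X) (hT : ∀ x : X, T x = (1 - α) • x + α • N x)
    (v : X)
    (hv_mem : v ∈ closure (Set.range fun y : X => y - T y))
    (hv_min : ∀ w ∈ closure (Set.range fun y : X => y - T y), ‖v‖ ≤ ‖w‖)
    (hv_ran : v ∈ Set.range fun y : X => y - T y) :
    ∀ x : X,
      (Summable fun n : ℕ => ‖T^[n] x - T^[n + 1] x - v‖ ^ 2) ∧
      Filter.Tendsto (fun n : ℕ => T^[n] x - T^[n + 1] x) Filter.atTop (nhds v) :=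
  averaged_displacement_tendsto_min_vector_general N hN α hα T hT v hv_min hv_ran
end

section
/- Suppose T : X → X is nonexpansive, v ∈ ran(Id − T) is the minimal displacement vector of T, and the interior of Fix(v + T) is nonempty. Then for every x ∈ X, ∑ₙ ‖Tⁿx − Tⁿ⁺¹x − v‖ < ∞ and the sequence (Tⁿx + n·v)ₙ converges strongly (is Cauchy). -/
/-!
If a ball around `c` lies in `Fix (v + T)`, comparing `T` on that ball with `T (c - v)` shows that
`w := (c - v) - T (c - v)` satisfies `‖u + w‖ ≤ ‖u + v‖` for all small `u`; since `v` has minimal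
norm among displacements, `‖v‖ ≤ ‖w‖`, and the two together force `w = v`. So the interior of
`Fix (v + T)` is invariant under translation by `-v`, and `T^[n] c = c - n • v` on it. Hence the
shifted orbit `T^[n] x + n • v` is Fejér monotone with respect to an open ball `ball p ε`, which
gives `ε * ‖xₙ - xₙ₊₁‖ ≤ ‖xₙ - p‖ ^ 2 - ‖xₙ₊₁ - p‖ ^ 2`; this telescopes.
-/

open Metric Filter Topology

section

variable {X : Type*} [NormedAddCommGroup X]

def FejerMonotone (s : ℕ → X) (C : Set X) : Prop :=
  ∀ c ∈ C, ∀ n, ‖s (n + 1) - c‖ ≤ ‖s n - c‖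

variable [InnerProductSpace ℝ X]

theorem eq_of_norm_le_of_eventually_norm_add_le {v w : X} (hvw : ‖v‖ ≤ ‖w‖)
    (h : ∀ᶠ u in 𝓝 0, ‖u + w‖ ≤ ‖u + v‖) : w = v := by
  have hlim : Tendsto (fun t : ℝ => t • (w - v)) (𝓝[>] 0) (𝓝 0) :=
    ((continuous_id.smul continuous_const).tendsto' 0 0 (zero_smul ℝ _)).mono_left
      nhdsWithin_le_nhds
  obtain ⟨t, ht : 0 < t, hle⟩ := (eventually_mem_nhdsWithin.and (hlim.eventually h)).exists
  have hsq := pow_le_pow_left₀ (norm_nonneg _) hle 2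
  rw [norm_add_sq_real, norm_add_sq_real] at hsq
  have hinner : inner ℝ (t • (w - v)) w - inner ℝ (t • (w - v)) v = t * ‖w - v‖ ^ 2 := by
    rw [← inner_sub_right, real_inner_smul_left, real_inner_self_eq_norm_sq]
  have hsq_nonpos : ‖w - v‖ ^ 2 ≤ 0 := by nlinarith [norm_nonneg v, norm_nonneg w]
  simpa [sub_eq_zero] using hsq_nonpos

theorem mul_norm_sub_le_sq_sub_sq_of_forall_mem_ball {x y p : X} {ε : ℝ} (hε : 0 < ε)
    (h : ∀ c ∈ ball p ε, ‖y - c‖ ≤ ‖x - c‖) :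
    ε * ‖x - y‖ ≤ ‖x - p‖ ^ 2 - ‖y - p‖ ^ 2 := by
  rcases eq_or_ne x y with rfl | hxy
  · simp
  have hxy_pos : 0 < ‖x - y‖ := norm_pos_iff.mpr (sub_ne_zero.mpr hxy)
  set d := (ε / 2 / ‖x - y‖) • (x - y)
  have hd : ‖d‖ = ε / 2 := by
    rw [norm_smul, Real.norm_of_nonneg (by positivity)]
    field_simp
  have hsq := pow_le_pow_left₀ (norm_nonneg _) (h (p + d) (by simp [hd, hε])) 2
  rw [sub_add_eq_sub_sub, sub_add_eq_sub_sub, norm_sub_sq_real (y - p),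
    norm_sub_sq_real (x - p)] at hsq
  have hinner : inner ℝ (x - p) d - inner ℝ (y - p) d = ε / 2 * ‖x - y‖ := by
    rw [← inner_sub_left, sub_sub_sub_cancel_right, real_inner_smul_right,
      real_inner_self_eq_norm_sq]
    field_simp
  linarith

namespace FejerMonotone

variable {s : ℕ → X} {C : Set X}

theorem summable_norm_sub_succ (hs : FejerMonotone s C) (hC : (interior C).Nonempty) :
    Summable fun n => ‖s n - s (n + 1)‖ := by
  obtain ⟨p, hp⟩ := hC
  obtain ⟨ε, hε, hball⟩ := isOpen_iff.mp isOpen_interior p hp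
  have hstep n : ε * ‖s n - s (n + 1)‖ ≤ ‖s n - p‖ ^ 2 - ‖s (n + 1) - p‖ ^ 2 :=
    mul_norm_sub_le_sq_sub_sq_of_forall_mem_ball hε
      fun c hc => hs c (interior_subset (hball hc)) n
  refine summable_of_sum_range_le (c := ‖s 0 - p‖ ^ 2 / ε) (fun _ => norm_nonneg _) fun n => ?_
  rw [le_div_iff₀' hε, Finset.mul_sum]
  calc ∑ i ∈ Finset.range n, ε * ‖s i - s (i + 1)‖
      ≤ ∑ i ∈ Finset.range n, (‖s i - p‖ ^ 2 - ‖s (i + 1) - p‖ ^ 2) :=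
        Finset.sum_le_sum fun i _ => hstep i
    _ = ‖s 0 - p‖ ^ 2 - ‖s n - p‖ ^ 2 := Finset.sum_range_sub' _ n
    _ ≤ ‖s 0 - p‖ ^ 2 := sub_le_self _ (sq_nonneg _)

theorem cauchySeq (hs : FejerMonotone s C) (hC : (interior C).Nonempty) : CauchySeq s :=
  cauchySeq_of_summable_dist <| by simpa only [dist_eq_norm] using hs.summable_norm_sub_succ hC

end FejerMonotone

section Displacement

variable {T : X → X} {v : X}

theorem apply_sub_eq_of_mem_interior_fix (hT : ∀ x y, ‖T x - T y‖ ≤ ‖x - y‖)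
    (hv : ∀ y, ‖v‖ ≤ ‖y - T y‖) {c : X} (hc : c ∈ interior {x | v + T x = x}) :
    v + T (c - v) = c - v := by
  have hnear : ∀ᶠ u in 𝓝 0, ‖u + (c - v - T (c - v))‖ ≤ ‖u + v‖ := by
    have hcu : Tendsto (fun u : X => c + u) (𝓝 0) (𝓝 c) :=
      (continuous_const_add c).tendsto' 0 c (add_zero c)
    filter_upwards [hcu.eventually (mem_interior_iff_mem_nhds.mp hc)] with u hu
    have hTu : T (c + u) = c + u - v := eq_sub_of_add_eq' hu
    calc ‖u + (c - v - T (c - v))‖ = ‖T (c + u) - T (c - v)‖ := by rw [hTu]; congr 1; abel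
      _ ≤ ‖c + u - (c - v)‖ := hT _ _
      _ = ‖u + v‖ := by congr 1; abel
  exact (sub_eq_iff_eq_add.mp (eq_of_norm_le_of_eventually_norm_add_le (hv (c - v)) hnear)).symm

theorem sub_mem_interior_fix (hT : ∀ x y, ‖T x - T y‖ ≤ ‖x - y‖)
    (hv : ∀ y, ‖v‖ ≤ ‖y - T y‖) {c : X} (hc : c ∈ interior {x | v + T x = x}) :
    c - v ∈ interior {x | v + T x = x} := by
  refine mem_interior.mpr ⟨(· + v) ⁻¹' interior {x | v + T x = x}, fun y hy => ?_,
    isOpen_interior.preimage (continuous_add_const v), by simpa using hc⟩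
  simpa using apply_sub_eq_of_mem_interior_fix hT hv hy

theorem sub_nsmul_mem_interior_fix (hT : ∀ x y, ‖T x - T y‖ ≤ ‖x - y‖)
    (hv : ∀ y, ‖v‖ ≤ ‖y - T y‖) {c : X} (hc : c ∈ interior {x | v + T x = x}) (n : ℕ) :
    c - n • v ∈ interior {x | v + T x = x} := by
  induction n with
  | zero => simpa using hc
  | succ n ih => simpa [succ_nsmul, sub_add_eq_sub_sub] using sub_mem_interior_fix hT hv ih

theorem iterate_eq_sub_nsmul_of_mem_interior_fix (hT : ∀ x y, ‖T x - T y‖ ≤ ‖x - y‖)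
    (hv : ∀ y, ‖v‖ ≤ ‖y - T y‖) {c : X} (hc : c ∈ interior {x | v + T x = x}) (n : ℕ) :
    T^[n] c = c - n • v := by
  induction n with
  | zero => simp
  | succ n ih =>
    rw [Function.iterate_succ_apply', ih, succ_nsmul, ← sub_sub]
    have hfix : v + T (c - n • v) = c - n • v :=
      (interior_subset : interior {x | v + T x = x} ⊆ _) (sub_nsmul_mem_interior_fix hT hv hc n)
    exact eq_sub_of_add_eq' hfix

theorem fejerMonotone_iterate_add_nsmul (hT : ∀ x y, ‖T x - T y‖ ≤ ‖x - y‖)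
    (hv : ∀ y, ‖v‖ ≤ ‖y - T y‖) (x : X) :
    FejerMonotone (fun n => T^[n] x + n • v) (interior {x | v + T x = x}) := by
  intro c hc n
  have h := hT (T^[n] x) (T^[n] c)
  rw [← Function.iterate_succ_apply' T n x, ← Function.iterate_succ_apply' T n c,
    iterate_eq_sub_nsmul_of_mem_interior_fix hT hv hc,
    iterate_eq_sub_nsmul_of_mem_interior_fix hT hv hc] at h
  simpa only [sub_sub_eq_add_sub, add_sub_right_comm] using h

end Displacement

end

theorem interior_fix_nonempty_implies_convergence_general
    {X : Type*} [NormedAddCommGroup X] [InnerProductSpace ℝ X] [CompleteSpace X]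
    (T : X → X) (hT : ∀ x y : X, ‖T x - T y‖ ≤ ‖x - y‖)
    (v : X)
    (hv_min : ∀ w ∈ closure (Set.range fun y : X => y - T y), ‖v‖ ≤ ‖w‖)
    (hint : (interior {x : X | v + T x = x}).Nonempty) :
    ∀ x : X,
      (Summable fun n : ℕ => ‖T^[n] x - T^[n + 1] x - v‖) ∧
      ∃ l : X, Filter.Tendsto (fun n : ℕ => T^[n] x + n • v) Filter.atTop (nhds l) := by
  intro x
  have hv (y : X) : ‖v‖ ≤ ‖y - T y‖ := hv_min _ (subset_closure ⟨y, rfl⟩)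
  have hfejer := fejerMonotone_iterate_add_nsmul hT hv x
  rw [← interior_interior] at hint
  refine ⟨(hfejer.summable_norm_sub_succ hint).congr fun n => ?_,
    cauchySeq_tendsto_of_complete (hfejer.cauchySeq hint)⟩
  rw [Function.iterate_succ_apply', succ_nsmul]
  congr 1
  abel

theorem interior_fix_nonempty_implies_convergence
    {X : Type*} [NormedAddCommGroup X] [InnerProductSpace ℝ X] [CompleteSpace X]
    (T : X → X) (hT : ∀ x y : X, ‖T x - T y‖ ≤ ‖x - y‖)
    (v : X)
    (hv_mem : v ∈ closure (Set.range fun y : X => y - T y))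
    (hv_min : ∀ w ∈ closure (Set.range fun y : X => y - T y), ‖v‖ ≤ ‖w‖)
    (hv_ran : v ∈ Set.range fun y : X => y - T y)
    (hint : (interior {x : X | v + T x = x}).Nonempty) :
    ∀ x : X,
      (Summable fun n : ℕ => ‖T^[n] x - T^[n + 1] x - v‖) ∧
      ∃ l : X, Filter.Tendsto (fun n : ℕ => T^[n] x + n • v) Filter.atTop (nhds l) :=
  interior_fix_nonempty_implies_convergence_general T hT v hv_min hint
end

section
/- Let A : X → X be firmly nonexpansive and B : X ⇉ X maximally monotone. If z₁ and z₂ are both zeros of A + B, then Az₁ = Az₂ (i.e., A is constant on the zero set of A + B, so the Attouch–Théra dual solution set K = A(zer(A+B)) is at most a singleton). -/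
/-!
At zeros `z₁, z₂` of `A + B`, monotonicity of `B` applied to `-A z₁ ∈ B z₁`, `-A z₂ ∈ B z₂`
gives `⟪z₁ - z₂, A z₁ - A z₂⟫ ≤ 0`, while firm nonexpansiveness bounds `‖A z₁ - A z₂‖ ^ 2`
by that same inner product.
-/

open scoped RealInnerProductSpace

theorem inner_sub_nonpos_of_neg_mem_of_monotone {X : Type*} [NormedAddCommGroup X]
    [InnerProductSpace ℝ X] {B : X → Set X}
    (hBmono : ∀ x y u v : X, u ∈ B x → v ∈ B y → 0 ≤ ⟪x - y, u - v⟫)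
    {x y a b : X} (ha : -a ∈ B x) (hb : -b ∈ B y) :
    ⟪x - y, a - b⟫ ≤ 0 := by
  have h := hBmono x y _ _ ha hb
  rwa [← neg_sub', inner_neg_right, neg_nonneg] at h

theorem A_constant_on_zeros
    {X : Type*} [NormedAddCommGroup X] [InnerProductSpace ℝ X]
    (A : X → X) (hA : ∀ x y : X, ‖A x - A y‖ ^ 2 ≤ ⟪x - y, A x - A y⟫)
    (B : X → Set X)
    (hBmono : ∀ x y u v : X, u ∈ B x → v ∈ B y → 0 ≤ ⟪x - y, u - v⟫)
    (z₁ z₂ : X) (hz₁ : -A z₁ ∈ B z₁) (hz₂ : -A z₂ ∈ B z₂) :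
    A z₁ = A z₂ := by
  have hsq : ‖A z₁ - A z₂‖ ^ 2 ≤ 0 :=
    (hA z₁ z₂).trans (inner_sub_nonpos_of_neg_mem_of_monotone hBmono hz₁ hz₂)
  rw [← sub_eq_zero, ← norm_eq_zero]
  exact pow_eq_zero_iff two_ne_zero |>.mp (le_antisymm hsq (sq_nonneg _))
end

section
/- Let A : X → X be firmly nonexpansive and B maximally monotone. For every w ∈ X, the following are equivalent: (i) there exists x with w ∈ Ax + B(x − w); (ii) w ∈ ran(Id − T_FB) where T_FB = J_B(Id − A); in other words, the w-perturbed problem has a solution iff w is a displacement value of the forward-backward operator. -/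
/-! Since `J_B` is the resolvent, `J_B y = z` says exactly `y - z ∈ B z`. Taking `y = x - A x`
and `z = x - w` turns the fixed-point equation `x - J_B (x - A x) = w` into `w - A x ∈ B (x - w)`,
i.e. `w ∈ A x + B (x - w)`: the solutions of the `w`-perturbed problem are precisely the
fixed points of `w + T_FB`. -/

open scoped RealInnerProductSpace

theorem exists_mem_add_eq_iff_sub_mem {G : Type*} [AddCommGroup G] (S : Set G) (a w : G) :
    (∃ b ∈ S, a + b = w) ↔ w - a ∈ S := by
  constructor
  · rintro ⟨b, hb, rfl⟩
    rwa [add_sub_cancel_left]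
  · exact fun h => ⟨w - a, h, add_sub_cancel a w⟩

theorem perturbed_inclusion_iff_sub_resolvent_eq {X : Type*} [AddCommGroup X]
    (A : X → X) (B : X → Set X) (JB : X → X) (hJB : ∀ x z : X, JB x = z ↔ x - z ∈ B z)
    (w x : X) : (∃ b ∈ B (x - w), A x + b = w) ↔ x - JB (x - A x) = w := by
  rw [exists_mem_add_eq_iff_sub_mem, sub_eq_iff_comm, eq_comm, hJB, sub_sub_sub_cancel_left]

theorem perturbed_problem_solvable_iff_displacement_general
    {X : Type*} [NormedAddCommGroup X]
    (A : X → X)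
    (B : X → Set X)
    (JB : X → X) (hJB : ∀ x z : X, JB x = z ↔ x - z ∈ B z) :
    ∀ w : X,
      (∃ x : X, ∃ b ∈ B (x - w), A x + b = w) ↔
      w ∈ Set.range (fun x : X => x - JB (x - A x)) := fun w =>
  exists_congr (perturbed_inclusion_iff_sub_resolvent_eq A B JB hJB w)

theorem perturbed_problem_solvable_iff_displacement
    {X : Type*} [NormedAddCommGroup X] [InnerProductSpace ℝ X] [CompleteSpace X]
    (A : X → X) (hA : ∀ x y : X, ‖A x - A y‖ ^ 2 ≤ ⟪x - y, A x - A y⟫)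
    (B : X → Set X)
    (hBmono : ∀ x y u v : X, u ∈ B x → v ∈ B y → 0 ≤ ⟪x - y, u - v⟫)
    (hBmax : ∀ x u : X, (∀ y v : X, v ∈ B y → 0 ≤ ⟪x - y, u - v⟫) → u ∈ B x)
    (JB : X → X) (hJB : ∀ x z : X, JB x = z ↔ x - z ∈ B z) :
    ∀ w : X,
      (∃ x : X, ∃ b ∈ B (x - w), A x + b = w) ↔
      w ∈ Set.range (fun x : X => x - JB (x - A x)) :=
  perturbed_problem_solvable_iff_displacement_general A B JB hJB
end

section
/- Let A : X → X be firmly nonexpansive and B maximally monotone. Then ran(Id − T_DR) = ran(Id − T_FB), where T_DR := Id − J_A + J_B R_A (Douglas–Rachford) and T_FB := J_B(Id − A) (forward-backward); consequently the minimal displacement vectors of T_DR and T_FB coincide. -/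
/-! Writing `z = J_A x`, i.e. `x = z + A z`, turns the reflected point `2 J_A x - x` into the
forward step `z - A z`, so `x - T_DR x = z - T_FB z`. As `J_A` is onto, the two displacement maps
have the same range, hence the same closure and the same minimal-norm element. -/

open scoped RealInnerProductSpace

section Resolvent

variable {X : Type*} [AddCommGroup X] {A JA : X → X}

theorem resolvent_surjective (hJA : ∀ z, JA (z + A z) = z) : Function.Surjective JA :=
  fun z => ⟨z + A z, hJA z⟩

theorem two_nsmul_resolvent_sub_eq (hJA : ∀ x, JA x + A (JA x) = x) (x : X) :
    2 • JA x - x = JA x - A (JA x) := by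
  calc 2 • JA x - x = 2 • JA x - (JA x + A (JA x)) := by rw [hJA x]
    _ = JA x - A (JA x) := by abel

theorem douglasRachford_displacement_eq_comp_resolvent (JB : X → X)
    (hJA : ∀ x, JA x + A (JA x) = x) :
    (fun x => x - (x - JA x + JB (2 • JA x - x))) = (fun z => z - JB (z - A z)) ∘ JA := by
  funext x
  simp only [Function.comp_apply, two_nsmul_resolvent_sub_eq hJA]
  abel

end Resolvent

theorem ran_displacement_DR_eq_FB_general
    {X : Type*} [NormedAddCommGroup X] [InnerProductSpace ℝ X]
    (A : X → X)
    (JA : X → X) (hJA : ∀ x z : X, JA x = z ↔ z + A z = x)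
    (JB : X → X)
    (TDR TFB : X → X)
    (hTDR : ∀ x : X, TDR x = x - JA x + JB (2 • JA x - x))
    (hTFB : ∀ x : X, TFB x = JB (x - A x)) :
    (Set.range fun x : X => x - TDR x) = (Set.range fun x : X => x - TFB x) ∧
    ∀ v : X,
      ((v ∈ closure (Set.range fun x : X => x - TDR x) ∧
          ∀ w ∈ closure (Set.range fun x : X => x - TDR x), ‖v‖ ≤ ‖w‖) ↔
       (v ∈ closure (Set.range fun x : X => x - TFB x) ∧
          ∀ w ∈ closure (Set.range fun x : X => x - TFB x), ‖v‖ ≤ ‖w‖)) := by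
  have hDR : (fun x => x - TDR x) = (fun z => z - TFB z) ∘ JA := by
    simp only [hTDR, hTFB]
    exact douglasRachford_displacement_eq_comp_resolvent JB fun x => (hJA x (JA x)).mp rfl
  have hran : (Set.range fun x : X => x - TDR x) = Set.range fun x : X => x - TFB x := by
    rw [hDR, (resolvent_surjective fun z => (hJA (z + A z) z).mpr rfl).range_comp]
  exact ⟨hran, fun v => by rw [hran]⟩

theorem ran_displacement_DR_eq_FB
    {X : Type*} [NormedAddCommGroup X] [InnerProductSpace ℝ X] [CompleteSpace X]
    (A : X → X) (hA : ∀ x y : X, ‖A x - A y‖ ^ 2 ≤ ⟪x - y, A x - A y⟫)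
    (B : X → Set X)
    (hBmono : ∀ x y u v : X, u ∈ B x → v ∈ B y → 0 ≤ ⟪x - y, u - v⟫)
    (hBmax : ∀ x u : X, (∀ y v : X, v ∈ B y → 0 ≤ ⟪x - y, u - v⟫) → u ∈ B x)
    (JA : X → X) (hJA : ∀ x z : X, JA x = z ↔ z + A z = x)
    (JB : X → X) (hJB : ∀ x z : X, JB x = z ↔ x - z ∈ B z)
    (TDR TFB : X → X)
    (hTDR : ∀ x : X, TDR x = x - JA x + JB (2 • JA x - x))
    (hTFB : ∀ x : X, TFB x = JB (x - A x)) :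
    (Set.range fun x : X => x - TDR x) = (Set.range fun x : X => x - TFB x) ∧
    ∀ v : X,
      ((v ∈ closure (Set.range fun x : X => x - TDR x) ∧
          ∀ w ∈ closure (Set.range fun x : X => x - TDR x), ‖v‖ ≤ ‖w‖) ↔
       (v ∈ closure (Set.range fun x : X => x - TFB x) ∧
          ∀ w ∈ closure (Set.range fun x : X => x - TFB x), ‖v‖ ≤ ‖w‖)) :=
  ran_displacement_DR_eq_FB_general A JA hJA JB TDR TFB hTDR hTFB
end

section
/- Let L : X → X be linear and nonexpansive, b ∈ X, and T : x ↦ Lx + b. Suppose v := P_{cl ran(Id−T)}(0) satisfies v ∈ ran(Id − T), and let a ∈ X be such that v + b = a − La. Then for all n ∈ ℕ and x ∈ X: Tⁿx + n·v = (v + T)ⁿ x = a + Lⁿ(x − a), and Fix(v + T) = a + Fix L. -/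
/-!
Since `ran (Id - T) = ran (Id - L) - b` is invariant under translation by `ran (Id - L)`, the
minimal-norm element `v` stays minimal along the line `v + t (v - L v)`; hence `v ⊥ v - L v`,
and nonexpansiveness of `L` forces `L v = v`. Then `T` commutes with translation by `v`, which
gives `Tⁿ x + n v = (v + T)ⁿ x`, while `v + b = a - L a` says that `v + T` is `L` conjugated by
the translation `x ↦ x - a`.
-/

open scoped InnerProductSpace

section

variable {X : Type*} [NormedAddCommGroup X] [InnerProductSpace ℝ X]

theorem real_inner_eq_zero_of_forall_norm_le_norm_add_smul {v w : X}
    (h : ∀ t : ℝ, ‖v‖ ≤ ‖v + t • w‖) : ⟪v, w⟫_ℝ = 0 := by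
  set c := ⟪v, w⟫_ℝ
  have hw : 0 ≤ ‖w‖ ^ 2 := sq_nonneg _
  -- Minimality at `t = -c / (‖w‖² + 1)` gives `c² (‖w‖² + 2) ≤ 0`.
  have key := pow_le_pow_left₀ (norm_nonneg v) (h (-c / (‖w‖ ^ 2 + 1))) 2
  rw [norm_add_sq_real, real_inner_smul_right, norm_smul, mul_pow, Real.norm_eq_abs,
    sq_abs] at key
  field_simp at key
  nlinarith [sq_nonneg c]

theorem LinearMap.apply_eq_self_of_minimal_displacement (L : X →ₗ[ℝ] X)
    (hL : ∀ x, ‖L x‖ ≤ ‖x‖) {b v : X} (hv : v ∈ Set.range fun y => y - (L y + b))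
    (hmin : ∀ w ∈ Set.range fun y => y - (L y + b), ‖v‖ ≤ ‖w‖) : L v = v := by
  obtain ⟨y, rfl⟩ := hv
  set v := y - (L y + b)
  have hline : ∀ t : ℝ, ‖v‖ ≤ ‖v + t • (v - L v)‖ := fun t =>
    hmin _ ⟨y + t • v, by simp only [v, map_add, map_smul]; module⟩
  have horth := real_inner_eq_zero_of_forall_norm_le_norm_add_smul hline
  refine eq_of_norm_le_re_inner_eq_norm_sq (𝕜 := ℝ) (hL v) ?_
  rw [inner_sub_right, sub_eq_zero, real_inner_self_eq_norm_sq] at horth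
  rw [RCLike.re_to_real, real_inner_comm, ← horth]

end

theorem Function.iterate_add_left_comp_apply {M : Type*} [AddMonoid M] {f : M → M} {v : M}
    (hf : ∀ x, f (v + x) = v + f x) (n : ℕ) (x : M) :
    (fun y => v + f y)^[n] x = n • v + f^[n] x := by
  have hcomm : Function.Commute (v + ·) f := fun x => (hf x).symm
  change ((v + ·) ∘ f)^[n] x = _
  rw [hcomm.comp_iterate, Function.comp_apply, add_left_iterate]

theorem affine_iterates_formula_general
    {X : Type*} [NormedAddCommGroup X] [InnerProductSpace ℝ X]
    (L : X →ₗ[ℝ] X) (hL : ∀ x : X, ‖L x‖ ≤ ‖x‖)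
    (b : X) (T : X → X) (hT : ∀ x : X, T x = L x + b)
    (v : X)
    (hv_min : ∀ w ∈ closure (Set.range fun y : X => y - T y), ‖v‖ ≤ ‖w‖)
    (hv_ran : v ∈ Set.range fun y : X => y - T y)
    (a : X) (ha : v + b = a - L a) :
    (∀ (x : X) (n : ℕ),
        T^[n] x + n • v = (fun y : X => v + T y)^[n] x ∧
        (fun y : X => v + T y)^[n] x = a + (⇑L)^[n] (x - a)) ∧
    {x : X | v + T x = x} = (fun z : X => a + z) '' {z : X | L z = z} := by
  obtain rfl : T = fun x => L x + b := funext hT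
  have hLv : L v = v :=
    L.apply_eq_self_of_minimal_displacement hL hv_ran fun w hw => hv_min w (subset_closure hw)
  have hconj : Function.Semiconj (· - a) (fun y => v + (L y + b)) L := fun x => by
    change v + (L x + b) - a = L (x - a)
    rw [map_sub, add_left_comm, ha]
    abel
  refine ⟨fun x n => ⟨?_, ?_⟩, ?_⟩
  · rw [Function.iterate_add_left_comp_apply _ n x, add_comm]
    intro y
    rw [map_add, hLv]
    abel
  · exact eq_add_of_sub_eq' (hconj.iterate_right n x)
  · ext x
    rw [Set.image_add_left, Set.mem_preimage, Set.mem_ofPred_eq, Set.mem_ofPred_eq,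
      neg_add_eq_sub, ← hconj x, sub_left_inj]

theorem affine_iterates_formula
    {X : Type*} [NormedAddCommGroup X] [InnerProductSpace ℝ X] [CompleteSpace X]
    (L : X →ₗ[ℝ] X) (hL : ∀ x : X, ‖L x‖ ≤ ‖x‖)
    (b : X) (T : X → X) (hT : ∀ x : X, T x = L x + b)
    (v : X)
    (hv_mem : v ∈ closure (Set.range fun y : X => y - T y))
    (hv_min : ∀ w ∈ closure (Set.range fun y : X => y - T y), ‖v‖ ≤ ‖w‖)
    (hv_ran : v ∈ Set.range fun y : X => y - T y)
    (a : X) (ha : v + b = a - L a) :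
    (∀ (x : X) (n : ℕ),
        T^[n] x + n • v = (fun y : X => v + T y)^[n] x ∧
        (fun y : X => v + T y)^[n] x = a + (⇑L)^[n] (x - a)) ∧
    {x : X | v + T x = x} = (fun z : X => a + z) '' {z : X | L z = z} :=
  affine_iterates_formula_general L hL b T hT v hv_min hv_ran a ha
end
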